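/- arXiv:1406.1244 — 2 statements merged into one kernel-verified Lean document; each statement's English description precedes it below -/
import Mathlib

section
/- Let S ⊆ V, γ > 1, and let v ∈ S be a 'good' node, i.e., |{u ∈ S : SSRC_S(u) ≥ SSRC_S(v)}| ≥ (1 − 1/γ)·|S|. Then for any shortest path tree T_v rooted at v, RC_S(T_v) ≤ ((2 − 2/|S|)/(1 − 1/γ)) · RC_S(G). -/
open SimpleGraph Finset
open scoped Classical

/-- The total weight of a walk in a graph with edge-weight function `w`. -/
noncomputable def walkW {V : Type*} (w : V → V → ℝ) {G : SimpleGraph V} {u v : V}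
    (p : G.Walk u v) : ℝ :=
  (p.darts.map (fun d => w d.toProd.1 d.toProd.2)).sum

/-- The weighted shortest-path distance between `u` and `v` in `G`. -/
noncomputable def wdist {V : Type*} (G : SimpleGraph V) (w : V → V → ℝ) (u v : V) : ℝ :=
  sInf {x : ℝ | ∃ p : G.Walk u v, walkW w p = x}

/-- The `S`-routing cost of `G`: sum of distances over ordered pairs from `S`. -/
noncomputable def RC {V : Type*} (G : SimpleGraph V) (w : V → V → ℝ) (S : Finset V) : ℝ :=
  ∑ u ∈ S, ∑ v ∈ S, wdist G w u v

/-- The single-source routing cost from `v` to the nodes of `S`. -/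
noncomputable def SSRC {V : Type*} (G : SimpleGraph V) (w : V → V → ℝ) (S : Finset V)
    (v : V) : ℝ :=
  ∑ u ∈ S, wdist G w v u

/-- The set of terminals of `S` lying in the component of `a` after deleting edge `s(a,b)`. -/
noncomputable def Zcomp {V : Type*} (T : SimpleGraph V) (S : Finset V) (a b : V) : Finset V :=
  S.filter (fun z => (T.deleteEdges {s(a, b)}).Reachable a z)



section Helper
variable {V : Type*} {H : SimpleGraph V} (w : V → V → ℝ)

lemma walkW_nonneg (hnn : ∀ a b, H.Adj a b → 0 ≤ w a b) {u v : V} (p : H.Walk u v) :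
    0 ≤ walkW w p := by
  apply List.sum_nonneg
  intro x hx
  simp only [List.mem_map] at hx
  obtain ⟨d, hd, rfl⟩ := hx
  exact hnn _ _ d.adj

lemma wdist_nonneg (hnn : ∀ a b, H.Adj a b → 0 ≤ w a b) (u v : V) :
    0 ≤ wdist H w u v := by
  apply Real.sInf_nonneg
  rintro x ⟨p, rfl⟩
  exact walkW_nonneg w hnn p

lemma wdist_le_walk (hnn : ∀ a b, H.Adj a b → 0 ≤ w a b) {u v : V} (p : H.Walk u v) :
    wdist H w u v ≤ walkW w p :=
  csInf_le ⟨0, by rintro x ⟨q, rfl⟩; exact walkW_nonneg w hnn q⟩ ⟨p, rfl⟩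

lemma walkW_append {u v x : V} (p : H.Walk u v) (q : H.Walk v x) :
    walkW w (p.append q) = walkW w p + walkW w q := by
  simp [walkW, Walk.darts_append]

lemma walkW_reverse (hsymm : ∀ a b, w a b = w b a) {u v : V} (p : H.Walk u v) :
    walkW w p.reverse = walkW w p := by
  simp only [walkW, Walk.darts_reverse, List.map_reverse, List.sum_reverse, List.map_map]
  have hf : ((fun d => w d.toProd.1 d.toProd.2) ∘ Dart.symm) =
      (fun d : H.Dart => w d.toProd.1 d.toProd.2) := by
    funext d
    simp only [Function.comp_apply, Dart.symm_toProd, Prod.fst_swap, Prod.snd_swap]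
    exact hsymm _ _
  rw [hf]

lemma wdist_symm (hsymm : ∀ a b, w a b = w b a) (u v : V) :
    wdist H w u v = wdist H w v u := by
  unfold wdist
  congr 1
  ext x
  constructor <;> rintro ⟨p, rfl⟩ <;> exact ⟨p.reverse, walkW_reverse w hsymm p⟩

lemma wdist_self (hnn : ∀ a b, H.Adj a b → 0 ≤ w a b) (u : V) :
    wdist H w u u = 0 := by
  refine le_antisymm ?_ (wdist_nonneg w hnn u u)
  have := wdist_le_walk w hnn (Walk.nil : H.Walk u u)
  simpa [walkW] using this

lemma wdist_triangle (hnn : ∀ a b, H.Adj a b → 0 ≤ w a b) (hconn : H.Connected)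
    (u v x : V) : wdist H w u x ≤ wdist H w u v + wdist H w v x := by
  have hne : ∀ a b : V, ({y : ℝ | ∃ p : H.Walk a b, walkW w p = y}).Nonempty := by
    intro a b
    obtain ⟨p⟩ := hconn.preconnected a b
    exact ⟨walkW w p, p, rfl⟩
  have h1 : wdist H w u x - wdist H w v x ≤ wdist H w u v := by
    apply le_csInf (hne u v)
    rintro a ⟨p, rfl⟩
    have h2 : wdist H w u x - walkW w p ≤ wdist H w v x := by
      apply le_csInf (hne v x)
      rintro b ⟨q, rfl⟩
      have h3 := wdist_le_walk w hnn (p.append q)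
      rw [walkW_append] at h3
      linarith
    linarith
  linarith

end Helper

/-- If `v` is a good node, its SP-tree is a `((2 - 2/|S|)/(1 - 1/γ))`-approximation to
the routing cost of `G`. -/
theorem stmt10 {V : Type*} [Fintype V] (G : SimpleGraph V) (w : V → V → ℝ)
    (hconn : G.Connected) (hpos : ∀ a b, G.Adj a b → 0 < w a b)
    (hsymm : ∀ a b, w a b = w b a)
    (S : Finset V) (hS : 2 ≤ S.card) (γ : ℝ) (hγ : 1 < γ) (v : V) (hv : v ∈ S)
    (hgood : (1 - 1 / γ) * (S.card : ℝ) ≤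
      ((S.filter (fun u => SSRC G w S v ≤ SSRC G w S u)).card : ℝ))
    (T : SimpleGraph V) (hTG : T ≤ G) (hTree : T.IsTree)
    (hSP : ∀ x, wdist T w v x = wdist G w v x) :
    RC T w S ≤ ((2 - 2 / (S.card : ℝ)) / (1 - 1 / γ)) * RC G w S := by
  have hnnG : ∀ a b, G.Adj a b → 0 ≤ w a b := fun a b h => (hpos a b h).le
  have hnnT : ∀ a b, T.Adj a b → 0 ≤ w a b := fun a b h => hnnG a b (hTG h)
  have hTconn : T.Connected := hTree.isConnected
  set B := SSRC G w S v with hBdef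
  have hB0 : 0 ≤ B := Finset.sum_nonneg fun u _ => wdist_nonneg w hnnG v u
  set n : ℝ := (S.card : ℝ) with hndef
  have hn2 : (2 : ℝ) ≤ n := by rw [hndef]; exact_mod_cast hS
  have hc : (0 : ℝ) < 1 - 1 / γ := by
    have : 1 / γ < 1 := by
      rw [div_lt_one (by linarith)]; linarith
    linarith
  -- Step 1: RC T w S ≤ (2n - 2) * B
  have step1 : RC T w S ≤ (2 * n - 2) * B := by
    have hrow : ∀ u ∈ S, ∑ x ∈ S, wdist T w u x ≤ (n - 2) * wdist G w v u + B := by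
      intro u hu
      have hself : wdist T w u u = 0 := wdist_self w hnnT u
      rw [← Finset.sum_erase S hself]
      have hcard : ((S.erase u).card : ℝ) = n - 1 := by
        rw [Finset.card_erase_of_mem hu]
        have : 1 ≤ S.card := by omega
        push_cast [Nat.cast_sub this]
        ring
      calc ∑ x ∈ S.erase u, wdist T w u x
          ≤ ∑ x ∈ S.erase u, (wdist G w v u + wdist G w v x) := by
            apply Finset.sum_le_sum
            intro x hx
            calc wdist T w u x ≤ wdist T w u v + wdist T w v x :=
                  wdist_triangle w hnnT hTconn u v x
              _ = wdist G w v u + wdist G w v x := by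
                  rw [wdist_symm w hsymm u v, hSP, hSP]
        _ = ((S.erase u).card : ℝ) * wdist G w v u + ∑ x ∈ S.erase u, wdist G w v x := by
            rw [Finset.sum_add_distrib, Finset.sum_const, nsmul_eq_mul]
        _ = (n - 1) * wdist G w v u + (B - wdist G w v u) := by
            rw [hcard, Finset.sum_erase_eq_sub hu]
            rfl
        _ = (n - 2) * wdist G w v u + B := by ring
    have hsum : ∑ u ∈ S, ((n - 2) * wdist G w v u + B) = (2 * n - 2) * B := by
      rw [Finset.sum_add_distrib, ← Finset.mul_sum, Finset.sum_const, nsmul_eq_mul]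
      have : ∑ u ∈ S, wdist G w v u = B := rfl
      rw [this]
      ring
    calc RC T w S = ∑ u ∈ S, ∑ x ∈ S, wdist T w u x := rfl
      _ ≤ ∑ u ∈ S, ((n - 2) * wdist G w v u + B) := Finset.sum_le_sum hrow
      _ = (2 * n - 2) * B := hsum
  -- Step 2: (1 - 1/γ) * n * B ≤ RC G w S
  have step2 : (1 - 1 / γ) * n * B ≤ RC G w S := by
    set F := S.filter (fun u => SSRC G w S v ≤ SSRC G w S u) with hFdef
    have h2 : (F.card : ℝ) * B ≤ ∑ u ∈ F, SSRC G w S u := by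
      have := Finset.card_nsmul_le_sum F (fun u => SSRC G w S u) B
        (fun u hu => (Finset.mem_filter.mp hu).2)
      rwa [nsmul_eq_mul] at this
    have h3 : ∑ u ∈ F, SSRC G w S u ≤ ∑ u ∈ S, SSRC G w S u :=
      Finset.sum_le_sum_of_subset_of_nonneg (Finset.filter_subset _ _)
        (fun u hu _ => Finset.sum_nonneg fun x _ => wdist_nonneg w hnnG u x)
    have h4 : RC G w S = ∑ u ∈ S, SSRC G w S u := rfl
    have h5 : (1 - 1 / γ) * n * B ≤ (F.card : ℝ) * B :=
      mul_le_mul_of_nonneg_right hgood hB0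
    linarith
  -- Step 3: combine
  have hk : (0 : ℝ) ≤ (2 - 2 / n) / (1 - 1 / γ) := by
    apply div_nonneg _ hc.le
    have : 2 / n ≤ 1 := by
      rw [div_le_one (by linarith)]; linarith
    linarith
  have hn0 : n ≠ 0 := by intro h; rw [h] at hn2; linarith
  have hkey : (2 - 2 / n) / (1 - 1 / γ) * ((1 - 1 / γ) * n * B) = (2 * n - 2) * B := by
    calc (2 - 2 / n) / (1 - 1 / γ) * ((1 - 1 / γ) * n * B)
        = ((2 - 2 / n) / (1 - 1 / γ) * (1 - 1 / γ)) * (n * B) := by ring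
      _ = (2 - 2 / n) * (n * B) := by rw [div_mul_cancel₀ _ (ne_of_gt hc)]
      _ = (2 * n - 2) * B := by field_simp
  have := mul_le_mul_of_nonneg_left step2 hk
  rw [hkey] at this
  linarith
end

section
/- In the complete graph K_n with unit weights, any spanning star T (shortest path tree rooted at any vertex) satisfies RC_V(T)/RC_V(K_n) = 2(n−1)/n = 2 − 2/n; in particular the approximation ratio (2 − 2/|S|) of Theorem on SP-trees is tight for S = V. -/
/-! With unit weights the routing cost is a sum of hop distances. In `K_n` every ordered pair of
distinct vertices is at distance `1`, giving `n(n-1)`. In the star, distinct `u, v` are at distance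
`e u + e v`, where `e` is the indicator of the leaves, so the off-diagonal sum is
`2(n-1) · ∑ e = 2(n-1)²`. -/

open SimpleGraph Finset
open scoped Classical

lemma walkW_one_eq_length {V : Type*} {G : SimpleGraph V} {u v : V} (p : G.Walk u v) :
    walkW (fun _ _ => (1 : ℝ)) p = p.length := by
  simp [walkW, List.map_const']

/-- Both sides are `0` between unreachable vertices, the left one as `sInf ∅`. -/
lemma wdist_one_eq_dist {V : Type*} (G : SimpleGraph V) (u v : V) :
    wdist G (fun _ _ => 1) u v = G.dist u v := by
  by_cases hr : G.Reachable u v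
  · apply le_antisymm
    · obtain ⟨p, hp⟩ := hr.exists_walk_length_eq_dist
      refine csInf_le ⟨0, ?_⟩ ⟨p, by rw [walkW_one_eq_length, hp]⟩
      rintro _ ⟨q, rfl⟩
      rw [walkW_one_eq_length]
      positivity
    · refine le_csInf ⟨_, hr.some, rfl⟩ ?_
      rintro _ ⟨q, rfl⟩
      rw [walkW_one_eq_length]
      exact_mod_cast dist_le q
  · have hempty : {x : ℝ | ∃ p : G.Walk u v, walkW (fun _ _ => 1) p = x} = ∅ :=
      Set.eq_empty_of_forall_notMem fun _ ⟨p, _⟩ => hr ⟨p⟩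
    rw [wdist, hempty, Real.sInf_empty, dist_eq_zero_of_not_reachable hr, Nat.cast_zero]

section OffDiagonal

variable {V : Type*} [Fintype V]

lemma sum_ite_eq_zero_else {M : Type*} [AddCommMonoid M] (u : V) (a : M) :
    ∑ v, (if u = v then 0 else a) = (Fintype.card V - 1) • a := by
  rw [sum_ite, sum_const_zero, zero_add, sum_const, filter_ne, card_erase_of_mem (mem_univ u),
    card_univ]

lemma sum_sum_ite_eq_zero_else_add (f : V → ℕ) :
    ∑ u, ∑ v, (if u = v then 0 else f u + f v) = 2 * (Fintype.card V - 1) * ∑ u, f u := by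
  have hsplit : ∀ u v, (if u = v then 0 else f u + f v) =
      (if u = v then 0 else f u) + (if v = u then 0 else f v) := by
    intro u v
    by_cases h : u = v <;> simp [h, eq_comm]
  simp only [hsplit, sum_add_distrib]
  rw [sum_comm (f := fun u v => if v = u then 0 else f v)]
  simp only [sum_ite_eq_zero_else, smul_eq_mul, ← mul_sum]
  ring

end OffDiagonal

lemma sum_sum_dist_top {V : Type*} [Fintype V] :
    ∑ u : V, ∑ v, (⊤ : SimpleGraph V).dist u v = Fintype.card V * (Fintype.card V - 1) := by
  simp only [dist_top, sum_ite_eq_zero_else, smul_eq_mul, mul_one, sum_const, card_univ]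

lemma dist_starGraph {V : Type*} (r u v : V) :
    (starGraph r).dist u v =
      if u = v then 0 else (if r = u then 0 else 1) + (if r = v then 0 else 1) := by
  by_cases huv : u = v
  · simp [huv]
  by_cases hu : r = u
  · subst hu
    simp [huv, dist_eq_one_iff_adj, starGraph_adj]
  by_cases hv : r = v
  · subst hv
    simp [huv, hu, dist_eq_one_iff_adj, starGraph_adj]
  simp only [huv, hu, hv, if_false]
  have hpath : (starGraph r).dist u v ≤ 2 :=
    dist_le (.cons (starGraph_center_adj' hu) (.cons (starGraph_center_adj hv) .nil))
  have hpos : 0 < (starGraph r).dist u v := (connected_starGraph r).pos_dist_of_ne huv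
  have hne_one : (starGraph r).dist u v ≠ 1 := by
    rw [Ne, dist_eq_one_iff_adj, starGraph_adj]
    tauto
  omega

lemma sum_sum_dist_starGraph {V : Type*} [Fintype V] (r : V) :
    ∑ u, ∑ v, (starGraph r).dist u v = 2 * (Fintype.card V - 1) * (Fintype.card V - 1) := by
  simp only [dist_starGraph, sum_sum_ite_eq_zero_else_add, sum_ite_eq_zero_else, smul_eq_mul,
    mul_one]

theorem stmt14_general {V : Type*} [Fintype V] (c : V)
    (T : SimpleGraph V)
    (hAdj : ∀ a b, T.Adj a b ↔ (a = c ∧ b ≠ c) ∨ (b = c ∧ a ≠ c)) :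
    (∑ u : V, ∑ v : V, wdist T (fun _ _ => 1) u v) /
        (∑ u : V, ∑ v : V, wdist (⊤ : SimpleGraph V) (fun _ _ => 1) u v) =
      2 - 2 / (Fintype.card V : ℝ) := by
  have hT : T = starGraph c := by
    ext a b
    rw [hAdj, starGraph_adj]
    grind
  have hcard : 1 ≤ Fintype.card V := Fintype.card_pos_iff.mpr ⟨c⟩
  simp only [hT, wdist_one_eq_dist, ← Nat.cast_sum, sum_sum_dist_starGraph, sum_sum_dist_top]
  push_cast [Nat.cast_sub hcard]
  rcases hcard.eq_or_lt with hone | hgt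
  · -- for `n = 1` the left side is `0 / 0 = 0`
    simp [← hone]
  · have hgt' : (1 : ℝ) < Fintype.card V := by exact_mod_cast hgt
    field_simp [sub_ne_zero.mpr hgt'.ne']

/-- In the complete graph with unit weights, a spanning star achieves routing-cost ratio
exactly `2 - 2/n`: the bound `2 - 2/|S|` is tight for `S = V`. -/
theorem stmt14 {V : Type*} [Fintype V] (h : 2 ≤ Fintype.card V) (c : V)
    (T : SimpleGraph V)
    (hAdj : ∀ a b, T.Adj a b ↔ (a = c ∧ b ≠ c) ∨ (b = c ∧ a ≠ c)) :
    (∑ u : V, ∑ v : V, wdist T (fun _ _ => 1) u v) /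
        (∑ u : V, ∑ v : V, wdist (⊤ : SimpleGraph V) (fun _ _ => 1) u v) =
      2 - 2 / (Fintype.card V : ℝ) :=
  stmt14_general c T hAdj
end
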